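/- arXiv:2211.06344 — 2 statements merged into one kernel-verified Lean document; each statement's English description precedes it below -/
import Mathlib

section
/- SE convergence (first part of Theorem 2): suppose f_x : [0,∞) → [0,a] and f_s : [0,∞) → [0,b] are nonincreasing with f_x(0) = a and f_s(0) = b, and η₁, η₂ : [0,a] × [0,b] → [0,∞) are antitone in each argument. Then each coordinate of the SE iterate sequence (τ^k) converges, so τ^k converges to some limit τ* ∈ [0,a] × [0,b], and each coordinate of (ρ^k) is nondecreasing. If moreover f_x, f_s, η₁, η₂ are continuous and the sequence (ρ^k) is bounded, then the limit τ* is a fixed point of the SE: τ* = (f_x(η₁(τ*)), f_s(η₂(τ*))). -/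
/-- **SE convergence (first part of Theorem 2).**
Under nonincreasing decoder transfer functions and an antitone detector transfer
function, each coordinate of the SE iterate sequence `τ` converges, so `τ`
converges to some limit `τ* ∈ [0,a] × [0,b]`, and each coordinate of `ρ` is
nondecreasing.  If moreover `fx, fs, η₁, η₂` are continuous and `ρ` is bounded,
then the limit `τ*` is a fixed point of the SE. -/
theorem se_convergence
    (a b : ℝ) (ha : 0 < a) (hb : 0 < b)
    (fx fs : ℝ → ℝ) (η1 η2 : ℝ × ℝ → ℝ)
    (hfx_range : ∀ x : ℝ, 0 ≤ x → fx x ∈ Set.Icc 0 a)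
    (hfs_range : ∀ x : ℝ, 0 ≤ x → fs x ∈ Set.Icc 0 b)
    (hfx_anti : ∀ x y : ℝ, 0 ≤ x → x ≤ y → fx y ≤ fx x)
    (hfs_anti : ∀ x y : ℝ, 0 ≤ x → x ≤ y → fs y ≤ fs x)
    (hfx0 : fx 0 = a) (hfs0 : fs 0 = b)
    (hη1_nonneg : ∀ τ ∈ Set.Icc ((0 : ℝ), (0 : ℝ)) (a, b), 0 ≤ η1 τ)
    (hη2_nonneg : ∀ τ ∈ Set.Icc ((0 : ℝ), (0 : ℝ)) (a, b), 0 ≤ η2 τ)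
    (hη1_anti : ∀ τ τ' : ℝ × ℝ, τ ∈ Set.Icc ((0 : ℝ), (0 : ℝ)) (a, b) →
      τ' ∈ Set.Icc ((0 : ℝ), (0 : ℝ)) (a, b) → τ ≤ τ' → η1 τ' ≤ η1 τ)
    (hη2_anti : ∀ τ τ' : ℝ × ℝ, τ ∈ Set.Icc ((0 : ℝ), (0 : ℝ)) (a, b) →
      τ' ∈ Set.Icc ((0 : ℝ), (0 : ℝ)) (a, b) → τ ≤ τ' → η2 τ' ≤ η2 τ)
    (τ ρ : ℕ → ℝ × ℝ)
    (hτ0 : τ 0 = (a, b))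
    (hρ : ∀ k : ℕ, ρ k = (η1 (τ k), η2 (τ k)))
    (hτ : ∀ k : ℕ, τ (k + 1) = (fx (ρ k).1, fs (ρ k).2)) :
    ∃ τstar ∈ Set.Icc ((0 : ℝ), (0 : ℝ)) (a, b),
      Filter.Tendsto τ Filter.atTop (nhds τstar) ∧
      Monotone (fun k => (ρ k).1) ∧ Monotone (fun k => (ρ k).2) ∧
      ((ContinuousOn fx (Set.Ici 0) ∧ ContinuousOn fs (Set.Ici 0) ∧
        ContinuousOn η1 (Set.Icc ((0 : ℝ), (0 : ℝ)) (a, b)) ∧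
        ContinuousOn η2 (Set.Icc ((0 : ℝ), (0 : ℝ)) (a, b)) ∧
        (∃ C : ℝ, ∀ k : ℕ, (ρ k).1 ≤ C ∧ (ρ k).2 ≤ C)) →
        τstar = (fx (η1 τstar), fs (η2 τstar))) := by

  classical
  -- all iterates stay in the box
  have hmem : ∀ k, τ k ∈ Set.Icc ((0 : ℝ), (0 : ℝ)) (a, b) := by
    intro k
    induction k with
    | zero =>
      rw [hτ0]
      exact ⟨⟨ha.le, hb.le⟩, le_refl _⟩
    | succ n ih =>
      have h1 := hη1_nonneg _ ih
      have h2 := hη2_nonneg _ ih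
      have hx := hfx_range (η1 (τ n)) h1
      have hy := hfs_range (η2 (τ n)) h2
      rw [hτ n, hρ n]
      exact ⟨⟨hx.1, hy.1⟩, ⟨hx.2, hy.2⟩⟩
  have hρ1nn : ∀ k, 0 ≤ (ρ k).1 := by
    intro k; rw [hρ k]; exact hη1_nonneg _ (hmem k)
  have hρ2nn : ∀ k, 0 ≤ (ρ k).2 := by
    intro k; rw [hρ k]; exact hη2_nonneg _ (hmem k)
  -- τ is (componentwise) antitone
  have hdec : ∀ k, τ (k + 1) ≤ τ k := by
    intro k
    induction k with
    | zero => rw [hτ0]; exact (hmem 1).2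
    | succ n ih =>
      have hr1 : (ρ n).1 ≤ (ρ (n + 1)).1 := by
        rw [hρ n, hρ (n + 1)]
        exact hη1_anti _ _ (hmem (n + 1)) (hmem n) ih
      have hr2 : (ρ n).2 ≤ (ρ (n + 1)).2 := by
        rw [hρ n, hρ (n + 1)]
        exact hη2_anti _ _ (hmem (n + 1)) (hmem n) ih
      rw [hτ (n + 1), hτ n]
      exact ⟨hfx_anti _ _ (hρ1nn n) hr1, hfs_anti _ _ (hρ2nn n) hr2⟩
  -- ρ is monotone in each coordinate
  have hρmono1 : Monotone (fun k => (ρ k).1) := by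
    apply monotone_nat_of_le_succ
    intro n
    rw [hρ n, hρ (n + 1)]
    exact hη1_anti _ _ (hmem (n + 1)) (hmem n) (hdec n)
  have hρmono2 : Monotone (fun k => (ρ k).2) := by
    apply monotone_nat_of_le_succ
    intro n
    rw [hρ n, hρ (n + 1)]
    exact hη2_anti _ _ (hmem (n + 1)) (hmem n) (hdec n)
  -- convergence of each coordinate of τ
  have hanti1 : Antitone (fun k => (τ k).1) :=
    antitone_nat_of_succ_le fun n => (hdec n).1
  have hanti2 : Antitone (fun k => (τ k).2) :=
    antitone_nat_of_succ_le fun n => (hdec n).2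
  have hbdd1 : BddBelow (Set.range fun k => (τ k).1) := by
    refine ⟨0, ?_⟩; rintro x ⟨k, rfl⟩; exact (hmem k).1.1
  have hbdd2 : BddBelow (Set.range fun k => (τ k).2) := by
    refine ⟨0, ?_⟩; rintro x ⟨k, rfl⟩; exact (hmem k).1.2
  set x1 : ℝ := ⨅ k, (τ k).1 with hx1
  set x2 : ℝ := ⨅ k, (τ k).2 with hx2
  have ht1 : Filter.Tendsto (fun k => (τ k).1) Filter.atTop (nhds x1) :=
    tendsto_atTop_ciInf hanti1 hbdd1
  have ht2 : Filter.Tendsto (fun k => (τ k).2) Filter.atTop (nhds x2) :=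
    tendsto_atTop_ciInf hanti2 hbdd2
  have hτt : Filter.Tendsto τ Filter.atTop (nhds (x1, x2)) := by
    have := ht1.prodMk_nhds ht2
    simpa using this
  have hmemstar : (x1, x2) ∈ Set.Icc ((0 : ℝ), (0 : ℝ)) (a, b) :=
    isClosed_Icc.mem_of_tendsto hτt (Filter.Eventually.of_forall hmem)
  refine ⟨(x1, x2), hmemstar, hτt, hρmono1, hρmono2, ?_⟩
  rintro ⟨hcx, hcs, hc1, hc2, C, hC⟩
  -- limits of ρ coordinates
  have hbA1 : BddAbove (Set.range fun k => (ρ k).1) := by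
    refine ⟨C, ?_⟩; rintro x ⟨k, rfl⟩; exact (hC k).1
  have hbA2 : BddAbove (Set.range fun k => (ρ k).2) := by
    refine ⟨C, ?_⟩; rintro x ⟨k, rfl⟩; exact (hC k).2
  set r1 : ℝ := ⨆ k, (ρ k).1 with hr1def
  set r2 : ℝ := ⨆ k, (ρ k).2 with hr2def
  have hρt1 : Filter.Tendsto (fun k => (ρ k).1) Filter.atTop (nhds r1) :=
    tendsto_atTop_ciSup hρmono1 hbA1
  have hρt2 : Filter.Tendsto (fun k => (ρ k).2) Filter.atTop (nhds r2) :=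
    tendsto_atTop_ciSup hρmono2 hbA2
  -- τ tends to (x1,x2) within the box
  have hτtw : Filter.Tendsto τ Filter.atTop
      (nhdsWithin (x1, x2) (Set.Icc ((0 : ℝ), (0 : ℝ)) (a, b))) :=
    tendsto_nhdsWithin_of_tendsto_nhds_of_eventually_within _ hτt
      (Filter.Eventually.of_forall hmem)
  -- r1 = η1 (x1,x2), r2 = η2 (x1,x2)
  have hη1lim : Filter.Tendsto (fun k => (ρ k).1) Filter.atTop
      (nhds (η1 (x1, x2))) := by
    have hcw := (hc1 (x1, x2) hmemstar).tendsto
    have : Filter.Tendsto (fun k => η1 (τ k)) Filter.atTop (nhds (η1 (x1, x2))) :=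
      hcw.comp hτtw
    refine this.congr fun k => ?_
    rw [hρ k]
  have hη2lim : Filter.Tendsto (fun k => (ρ k).2) Filter.atTop
      (nhds (η2 (x1, x2))) := by
    have hcw := (hc2 (x1, x2) hmemstar).tendsto
    have : Filter.Tendsto (fun k => η2 (τ k)) Filter.atTop (nhds (η2 (x1, x2))) :=
      hcw.comp hτtw
    refine this.congr fun k => ?_
    rw [hρ k]
  have hr1eq : r1 = η1 (x1, x2) := tendsto_nhds_unique hρt1 hη1lim
  have hr2eq : r2 = η2 (x1, x2) := tendsto_nhds_unique hρt2 hη2lim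
  -- r1, r2 are nonnegative
  have hr1nn : (0 : ℝ) ≤ r1 := le_trans (hρ1nn 0) (le_ciSup hbA1 0)
  have hr2nn : (0 : ℝ) ≤ r2 := le_trans (hρ2nn 0) (le_ciSup hbA2 0)
  -- ρ coordinates tend to r within Ici 0
  have hρtw1 : Filter.Tendsto (fun k => (ρ k).1) Filter.atTop
      (nhdsWithin r1 (Set.Ici (0 : ℝ))) :=
    tendsto_nhdsWithin_of_tendsto_nhds_of_eventually_within _ hρt1
      (Filter.Eventually.of_forall hρ1nn)
  have hρtw2 : Filter.Tendsto (fun k => (ρ k).2) Filter.atTop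
      (nhdsWithin r2 (Set.Ici (0 : ℝ))) :=
    tendsto_nhdsWithin_of_tendsto_nhds_of_eventually_within _ hρt2
      (Filter.Eventually.of_forall hρ2nn)
  -- x1 = fx r1, x2 = fs r2
  have hfx_lim : Filter.Tendsto (fun k => fx ((ρ k).1)) Filter.atTop
      (nhds (fx r1)) := (hcx r1 hr1nn).tendsto.comp hρtw1
  have hfs_lim : Filter.Tendsto (fun k => fs ((ρ k).2)) Filter.atTop
      (nhds (fs r2)) := (hcs r2 hr2nn).tendsto.comp hρtw2
  have hshift1 : Filter.Tendsto (fun k => (τ (k + 1)).1) Filter.atTop (nhds x1) :=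
    ht1.comp (Filter.tendsto_add_atTop_nat 1)
  have hshift2 : Filter.Tendsto (fun k => (τ (k + 1)).2) Filter.atTop (nhds x2) :=
    ht2.comp (Filter.tendsto_add_atTop_nat 1)
  have heq1 : x1 = fx r1 := by
    refine tendsto_nhds_unique ?_ hfx_lim
    refine hshift1.congr fun k => ?_
    rw [hτ k]
  have heq2 : x2 = fs r2 := by
    refine tendsto_nhds_unique ?_ hfs_lim
    refine hshift2.congr fun k => ?_
    rw [hτ k]
  rw [Prod.mk.injEq]
  exact ⟨heq1.trans (congrArg fx hr1eq), heq2.trans (congrArg fs hr2eq)⟩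
end

section
/- Fixed-point obstruction to strict path domination (core of the sufficiency proof of Theorem 2): suppose f_x is a continuous strictly decreasing bijection from [0,∞) onto (0,a] and f_s is a continuous strictly decreasing bijection from [0,∞) onto (0,b], and η₁, η₂ : [0,a] × [0,b] → [0,∞) are strictly antitone in each argument. If there exists a point τ* = (τ_x*, τ_s*) with 0 < τ_x* ≤ a and 0 < τ_s* ≤ b satisfying f_x⁻¹(τ_x*) = η₁(τ*) and f_s⁻¹(τ_s*) = η₂(τ*), then no monotone path γ from (a,b) to (0,0) has the property that every point (τ_x, τ_s) on γ with τ_x > 0 and τ_s > 0 satisfies both strict inequalities f_x⁻¹(τ_x) < η₁(τ_x, τ_s) and f_s⁻¹(τ_s) < η₂(τ_x, τ_s). -/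
/-- **Fixed-point obstruction to strict path domination.**
Suppose `fx` is a continuous strictly decreasing bijection from `[0,∞)` onto
`(0,a]` with inverse `gx`, similarly `fs` onto `(0,b]` with inverse `gs`, and
`η₁, η₂ : [0,a] × [0,b] → [0,∞)` are strictly antitone in each argument.  If
there exists a point `τ* = (τx*, τs*)` with `0 < τx* ≤ a`, `0 < τs* ≤ b`
satisfying `gx τx* = η1 τ*` and `gs τs* = η2 τ*`, then no monotone path from
`(a,b)` to `(0,0)` strictly dominates, i.e. has the property that every point
`(τx, τs)` on it with `τx > 0` and `τs > 0` satisfies both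
`gx τx < η1 (τx, τs)` and `gs τs < η2 (τx, τs)`. -/
theorem se_fixed_point_obstruction
    (a b : ℝ) (ha : 0 < a) (hb : 0 < b)
    (fx fs gx gs : ℝ → ℝ) (η1 η2 : ℝ × ℝ → ℝ)
    (hfx_cont : ContinuousOn fx (Set.Ici 0))
    (hfs_cont : ContinuousOn fs (Set.Ici 0))
    (hfx_anti : StrictAntiOn fx (Set.Ici 0))
    (hfs_anti : StrictAntiOn fs (Set.Ici 0))
    (hfx_bij : Set.BijOn fx (Set.Ici 0) (Set.Ioc 0 a))
    (hfs_bij : Set.BijOn fs (Set.Ici 0) (Set.Ioc 0 b))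
    (hgx : Set.InvOn gx fx (Set.Ici 0) (Set.Ioc 0 a))
    (hgs : Set.InvOn gs fs (Set.Ici 0) (Set.Ioc 0 b))
    (hη1_nonneg : ∀ τ ∈ Set.Icc ((0 : ℝ), (0 : ℝ)) (a, b), 0 ≤ η1 τ)
    (hη2_nonneg : ∀ τ ∈ Set.Icc ((0 : ℝ), (0 : ℝ)) (a, b), 0 ≤ η2 τ)
    (hη1_anti1 : ∀ x x' y : ℝ, x ∈ Set.Icc 0 a → x' ∈ Set.Icc 0 a →
      y ∈ Set.Icc 0 b → x < x' → η1 (x', y) < η1 (x, y))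
    (hη1_anti2 : ∀ x y y' : ℝ, x ∈ Set.Icc 0 a → y ∈ Set.Icc 0 b →
      y' ∈ Set.Icc 0 b → y < y' → η1 (x, y') < η1 (x, y))
    (hη2_anti1 : ∀ x x' y : ℝ, x ∈ Set.Icc 0 a → x' ∈ Set.Icc 0 a →
      y ∈ Set.Icc 0 b → x < x' → η2 (x', y) < η2 (x, y))
    (hη2_anti2 : ∀ x y y' : ℝ, x ∈ Set.Icc 0 a → y ∈ Set.Icc 0 b →
      y' ∈ Set.Icc 0 b → y < y' → η2 (x, y') < η2 (x, y))
    (τx τs : ℝ)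
    (hτx : τx ∈ Set.Ioc 0 a) (hτs : τs ∈ Set.Ioc 0 b)
    (hfix1 : gx τx = η1 (τx, τs)) (hfix2 : gs τs = η2 (τx, τs)) :
    ¬ ∃ γ : ℝ → ℝ × ℝ,
      ContinuousOn γ (Set.Icc 0 1) ∧
      γ 0 = (a, b) ∧ γ 1 = (0, 0) ∧
      (∀ t ∈ Set.Icc (0 : ℝ) 1, γ t ∈ Set.Icc ((0 : ℝ), (0 : ℝ)) (a, b)) ∧
      AntitoneOn (fun t => (γ t).1) (Set.Icc 0 1) ∧
      AntitoneOn (fun t => (γ t).2) (Set.Icc 0 1) ∧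
      (∀ t ∈ Set.Icc (0 : ℝ) 1, 0 < (γ t).1 → 0 < (γ t).2 →
        gx ((γ t).1) < η1 (γ t) ∧ gs ((γ t).2) < η2 (γ t)) := by

  rintro ⟨γ, hcont, h0, h1, hrange, hm1, hm2, hdom⟩
  obtain ⟨hτx0, hτxa⟩ := hτx
  obtain ⟨hτs0, hτsb⟩ := hτs
  have hc1 : ContinuousOn (fun t => (γ t).1) (Set.Icc 0 1) :=
    continuous_fst.comp_continuousOn hcont
  have hc2 : ContinuousOn (fun t => (γ t).2) (Set.Icc 0 1) :=
    continuous_snd.comp_continuousOn hcont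
  have h01 : (0:ℝ) ≤ 1 := zero_le_one
  have hx1 : τx ∈ Set.Icc ((fun t => (γ t).1) 1) ((fun t => (γ t).1) 0) := by
    simp only [h0, h1]
    exact ⟨le_of_lt hτx0, hτxa⟩
  obtain ⟨t, ht, hgt⟩ := intermediate_value_Icc' h01 hc1 hx1
  replace hgt : (γ t).1 = τx := hgt
  have hmemb : ∀ u ∈ Set.Icc (0:ℝ) 1,
      (γ u).1 ∈ Set.Icc 0 a ∧ (γ u).2 ∈ Set.Icc 0 b := by
    intro u hu
    have h := hrange u hu
    rw [Set.mem_Icc, Prod.le_def, Prod.le_def] at h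
    exact ⟨⟨h.1.1, h.2.1⟩, ⟨h.1.2, h.2.2⟩⟩
  have hτxm : τx ∈ Set.Icc 0 a := ⟨le_of_lt hτx0, hτxa⟩
  have hτsm : τs ∈ Set.Icc 0 b := ⟨le_of_lt hτs0, hτsb⟩
  rcases le_or_gt τs (γ t).2 with hy | hy
  · -- second coordinate at t is ≥ τs : contradiction via η1
    have hpos2 : 0 < (γ t).2 := lt_of_lt_of_le hτs0 hy
    have hd := (hdom t ht (by rw [hgt]; exact hτx0) hpos2).1
    have hγt : γ t = (τx, (γ t).2) := by
      rw [← hgt]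
    rw [hγt] at hd
    have hle : η1 (τx, (γ t).2) ≤ η1 (τx, τs) := by
      rcases eq_or_lt_of_le hy with h | h
      · rw [← h]
      · exact le_of_lt (hη1_anti2 τx τs (γ t).2 hτxm hτsm ((hmemb t ht).2) h)
    rw [hfix1] at hd
    exact absurd (lt_of_lt_of_le hd hle) (lt_irrefl _)
  · -- second coordinate at t is < τs : find t' with (γ t').2 = τs
    have hx2 : τs ∈ Set.Icc ((fun t => (γ t).2) 1) ((fun t => (γ t).2) 0) := by
      simp only [h0, h1]
      exact ⟨le_of_lt hτs0, hτsb⟩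
    obtain ⟨t', ht', hgt'⟩ := intermediate_value_Icc' h01 hc2 hx2
    replace hgt' : (γ t').2 = τs := hgt'
    have htt : t' ≤ t := by
      by_contra h
      push_neg at h
      have := hm2 ht ht' (le_of_lt h)
      simp only [hgt'] at this
      exact absurd (lt_of_lt_of_le hy this) (lt_irrefl _)
    have hx' : τx ≤ (γ t').1 := by
      have := hm1 ht' ht htt
      simpa [hgt] using this
    have hpos1 : 0 < (γ t').1 := lt_of_lt_of_le hτx0 hx'
    have hd := (hdom t' ht' hpos1 (by rw [hgt']; exact hτs0)).2
    have hγt' : γ t' = ((γ t').1, τs) := by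
      rw [← hgt']
    rw [hγt'] at hd
    have hle : η2 ((γ t').1, τs) ≤ η2 (τx, τs) := by
      rcases eq_or_lt_of_le hx' with h | h
      · rw [← h]
      · exact le_of_lt (hη2_anti1 τx (γ t').1 τs hτxm ((hmemb t' ht').1) hτsm h)
    rw [hfix2] at hd
    exact absurd (lt_of_lt_of_le hd hle) (lt_irrefl _)
end
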